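/- arXiv:1507.06381 — 2 statements merged into one kernel-verified Lean document; each statement's English description precedes it below -/
import Mathlib

section
/- Let ι be a finite index set, let c_i (i ∈ ι) be pairwise distinct real numbers, and let λ be a complex number with λ ≠ c_i for all i. Then a pair (u, (û_i)_{i∈ι}) ∈ (dom A) × (⊕_i Ĥ_i) is an eigenvector of the multi-pole block operator matrix 𝒜 at λ if and only if u ≠ 0, A u − λ u − Σ_{i∈ι} (c_i − λ)⁻¹ B_i(B_i* u) = 0, and û_i = −(c_i − λ)⁻¹ B_i* u for every i ∈ ι. In particular λ is an eigenvalue of 𝒜 if and only if 0 is an eigenvalue of the rational operator function S(λ) = A − λ − Σ_i (c_i − λ)⁻¹ B_i B_i*. -/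
/-!
The last `|ι|` rows of the eigenvalue equation, `B i* u + c i v i = λ v i`, can be solved for
`v i` exactly because `λ ≠ c i`, giving `v i = -(c i - λ)⁻¹ B i* u`. Substituting this into the
first row turns it into `S(λ) u = 0`, and since `v` is determined by `u`, the pair `(u, v)` is
nonzero iff `u` is.
-/

section BlockEigenvector

variable {𝕜 : Type*} [Field 𝕜]

theorem add_smul_eq_smul_iff_eq_neg_inv_smul {V : Type*} [AddCommGroup V] [Module 𝕜 V]
    {c lam : 𝕜} (h : c ≠ lam) (w v : V) :
    w + c • v = lam • v ↔ v = -(c - lam)⁻¹ • w := by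
  have hne : c - lam ≠ 0 := sub_ne_zero.mpr h
  rw [neg_smul, ← smul_neg, eq_inv_smul_iff₀ hne, sub_smul, ← eq_sub_iff_add_eq',
    sub_eq_iff_eq_add, neg_add_eq_sub]

variable {ι : Type*} [Fintype ι] {H : Type*} [AddCommGroup H] [Module 𝕜 H]
  {K : ι → Type*} [∀ i, AddCommGroup (K i)] [∀ i, Module 𝕜 (K i)]
  (B : ∀ i, K i →ₗ[𝕜] H) (T : ∀ i, H →ₗ[𝕜] K i) (c : ι → 𝕜) {lam : 𝕜}

theorem blockEigen_iff (hlam : ∀ i, c i ≠ lam) (u Au : H) (v : ∀ i, K i) :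
    ((u, v) ≠ 0 ∧ Au + ∑ i, B i (v i) = lam • u ∧ ∀ i, T i u + c i • v i = lam • v i) ↔
      (u ≠ 0 ∧ Au - lam • u - ∑ i, (c i - lam)⁻¹ • B i (T i u) = 0 ∧
        ∀ i, v i = -(c i - lam)⁻¹ • T i u) := by
  simp only [add_smul_eq_smul_iff_eq_neg_inv_smul (hlam _)]
  have hsum (hv : ∀ i, v i = -(c i - lam)⁻¹ • T i u) :
      ∑ i, B i (v i) = -∑ i, (c i - lam)⁻¹ • B i (T i u) := by
    simp only [hv, neg_smul, map_neg, map_smul, Finset.sum_neg_distrib]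
  constructor
  · rintro ⟨hne, hrow, hv⟩
    have hv0 (hu : u = 0) : v = 0 := funext fun i => by simp [hv i, hu]
    refine ⟨fun hu => hne (by simp [hu, hv0 hu]), ?_, hv⟩
    rw [← hrow, hsum hv]
    abel
  · rintro ⟨hu, hrow, hv⟩
    refine ⟨fun h => hu (congrArg Prod.fst h), ?_, hv⟩
    rw [hsum hv, ← sub_eq_zero, ← hrow]
    abel

theorem exists_blockEigen_iff (hlam : ∀ i, c i ≠ lam) (u Au : H) :
    (∃ v : ∀ i, K i, (u, v) ≠ 0 ∧ Au + ∑ i, B i (v i) = lam • u ∧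
        ∀ i, T i u + c i • v i = lam • v i) ↔
      (u ≠ 0 ∧ Au - lam • u - ∑ i, (c i - lam)⁻¹ • B i (T i u) = 0) := by
  simp only [blockEigen_iff B T c hlam]
  exact ⟨fun ⟨_, hu, hrow, _⟩ => ⟨hu, hrow⟩,
    fun ⟨hu, hrow⟩ => ⟨fun i => -(c i - lam)⁻¹ • T i u, hu, hrow, fun _ => rfl⟩⟩

end BlockEigenvector

theorem stmt_2_general
    {H : Type*} [NormedAddCommGroup H] [InnerProductSpace ℂ H] [CompleteSpace H]
    {ι : Type*} [Fintype ι]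
    (K : ι → Type*) [∀ i, NormedAddCommGroup (K i)] [∀ i, InnerProductSpace ℂ (K i)]
    [∀ i, CompleteSpace (K i)]
    (A : H →ₗ.[ℂ] H) (B : ∀ i, K i →L[ℂ] H)
    (c : ι → ℝ)
    (lam : ℂ) (hlam : ∀ i, lam ≠ (c i : ℂ)) :
    (∀ (u : A.domain) (v : ∀ i, K i),
      ((((u : H), v) ≠ 0 ∧
        A u + ∑ i, B i (v i) = lam • (u : H) ∧
        ∀ i, ContinuousLinearMap.adjoint (B i) (u : H) + (c i : ℂ) • v i = lam • v i)
       ↔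
       ((u : H) ≠ 0 ∧
        A u - lam • (u : H)
          - ∑ i, ((c i : ℂ) - lam)⁻¹ • B i (ContinuousLinearMap.adjoint (B i) (u : H)) = 0 ∧
        ∀ i, v i = -(((c i : ℂ) - lam)⁻¹) • ContinuousLinearMap.adjoint (B i) (u : H))))
    ∧
    ((∃ (u : A.domain) (v : ∀ i, K i), ((u : H), v) ≠ 0 ∧
        A u + ∑ i, B i (v i) = lam • (u : H) ∧
        ∀ i, ContinuousLinearMap.adjoint (B i) (u : H) + (c i : ℂ) • v i = lam • v i)
      ↔
     (∃ u : A.domain, (u : H) ≠ 0 ∧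
        A u - lam • (u : H)
          - ∑ i, ((c i : ℂ) - lam)⁻¹ • B i (ContinuousLinearMap.adjoint (B i) (u : H)) = 0)) := by
  have hpoles : ∀ i, (c i : ℂ) ≠ lam := fun i => (hlam i).symm
  let B' := fun i => (B i : K i →ₗ[ℂ] H)
  let T := fun i => (ContinuousLinearMap.adjoint (B i) : H →ₗ[ℂ] K i)
  exact ⟨fun u => blockEigen_iff B' T _ hpoles u (A u),
    exists_congr fun u => exists_blockEigen_iff B' T _ hpoles u (A u)⟩

/-- Multi-pole case: for `λ` distinct from all the (pairwise distinct, real) poles `c i`,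
a pair `(u, v)` is an eigenvector of the multi-pole block operator matrix `𝒜` at `λ`
iff `u ≠ 0`, `A u - λ u - ∑ i (c i - λ)⁻¹ B i (B i)* u = 0` and
`v i = -(c i - λ)⁻¹ (B i)* u` for all `i`; in particular `λ` is an eigenvalue of `𝒜`
iff `0` is an eigenvalue of `S(λ) = A - λ - ∑ i (c i - λ)⁻¹ B i (B i)*`. -/
theorem stmt_2
    {H : Type*} [NormedAddCommGroup H] [InnerProductSpace ℂ H] [CompleteSpace H]
    {ι : Type*} [Fintype ι]
    (K : ι → Type*) [∀ i, NormedAddCommGroup (K i)] [∀ i, InnerProductSpace ℂ (K i)]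
    [∀ i, CompleteSpace (K i)]
    (A : H →ₗ.[ℂ] H) (B : ∀ i, K i →L[ℂ] H)
    (c : ι → ℝ) (hc : Function.Injective c)
    (lam : ℂ) (hlam : ∀ i, lam ≠ (c i : ℂ)) :
    (∀ (u : A.domain) (v : ∀ i, K i),
      ((((u : H), v) ≠ 0 ∧
        A u + ∑ i, B i (v i) = lam • (u : H) ∧
        ∀ i, ContinuousLinearMap.adjoint (B i) (u : H) + (c i : ℂ) • v i = lam • v i)
       ↔
       ((u : H) ≠ 0 ∧
        A u - lam • (u : H)
          - ∑ i, ((c i : ℂ) - lam)⁻¹ • B i (ContinuousLinearMap.adjoint (B i) (u : H)) = 0 ∧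
        ∀ i, v i = -(((c i : ℂ) - lam)⁻¹) • ContinuousLinearMap.adjoint (B i) (u : H))))
    ∧
    ((∃ (u : A.domain) (v : ∀ i, K i), ((u : H), v) ≠ 0 ∧
        A u + ∑ i, B i (v i) = lam • (u : H) ∧
        ∀ i, ContinuousLinearMap.adjoint (B i) (u : H) + (c i : ℂ) • v i = lam • v i)
      ↔
     (∃ u : A.domain, (u : H) ≠ 0 ∧
        A u - lam • (u : H)
          - ∑ i, ((c i : ℂ) - lam)⁻¹ • B i (ContinuousLinearMap.adjoint (B i) (u : H)) = 0)) :=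
  stmt_2_general K A B c lam hlam
end

section
/- Let b > 0, c ∈ ℝ and t ∈ ℝ with t ≠ c, and set δ_b(t) := b · tan((1/2) · arctan(2b/|t − c|)). Then (t + c)/2 − √(((t − c)/2)² + b²) = min(t, c) − δ_b(t) and (t + c)/2 + √(((t − c)/2)² + b²) = max(t, c) + δ_b(t). -/
/-!
Put `a = |t - c| / 2`, so that `2b / |t - c| = b / a`. The half-angle formula
`tan (θ / 2) = sin θ / (1 + cos θ)` at `θ = arctan (b / a)` gives
`δ_b(t) = b · tan (½ arctan (b / a)) = √(a² + b²) - a`,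
and the claim follows from `min t c = (t + c) / 2 - a` and `max t c = (t + c) / 2 + a`.
-/

namespace Real

/-- Where `cos (θ / 2) = 0`, both sides are the junk value `0`. -/
theorem tan_half_eq_sin_div_one_add_cos (θ : ℝ) : tan (θ / 2) = sin θ / (1 + cos θ) := by
  have hθ : θ = 2 * (θ / 2) := by ring
  rw [hθ, sin_two_mul, cos_two_mul, tan_eq_sin_div_cos, ← hθ]
  rcases eq_or_ne (cos (θ / 2)) 0 with h | h
  · simp [h]
  · field_simp
    ring

theorem tan_half_arctan (x : ℝ) : tan (arctan x / 2) = x / (1 + √(1 + x ^ 2)) := by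
  rw [tan_half_eq_sin_div_one_add_cos, sin_arctan, cos_arctan]
  field_simp
  ring

theorem mul_tan_half_arctan_div {a : ℝ} (ha : 0 < a) (b : ℝ) :
    b * tan (arctan (b / a) / 2) = √(a ^ 2 + b ^ 2) - a := by
  have hS : √(1 + (b / a) ^ 2) = √(a ^ 2 + b ^ 2) / a := by
    rw [eq_div_iff ha.ne', ← sqrt_sq ha.le, ← sqrt_mul (by positivity), sqrt_sq ha.le]
    congr 1
    field_simp
  have hS2 : √(a ^ 2 + b ^ 2) ^ 2 = a ^ 2 + b ^ 2 := sq_sqrt (by positivity)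
  rw [tan_half_arctan, hS]
  field_simp
  linear_combination -hS2

end Real

theorem stmt_9_general (b c t : ℝ) (ht : t ≠ c) :
    let δ := b * Real.tan ((1 / 2) * Real.arctan (2 * b / |t - c|))
    (t + c) / 2 - Real.sqrt (((t - c) / 2) ^ 2 + b ^ 2) = min t c - δ ∧
    (t + c) / 2 + Real.sqrt (((t - c) / 2) ^ 2 + b ^ 2) = max t c + δ := by
  intro δ
  have ha : 0 < |t - c| / 2 := by positivity [sub_ne_zero.2 ht]
  have hδ : δ = Real.sqrt (((t - c) / 2) ^ 2 + b ^ 2) - |t - c| / 2 := by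
    have hx : 2 * b / |t - c| = b / (|t - c| / 2) := by field_simp
    have hsq : ((t - c) / 2) ^ 2 = (|t - c| / 2) ^ 2 := by rw [div_pow, div_pow, sq_abs]
    rw [hsq, ← Real.mul_tan_half_arctan_div ha, ← hx, ← one_div_mul_eq_div]
  have hsum := min_add_max t c
  have hdiff := max_sub_min_eq_abs' t c
  constructor <;> linarith

/-- With `δ_b(t) = b · tan(½ arctan(2b/|t-c|))`, the roots of `(t-λ)(c-λ) = b²` are
`(t+c)/2 ∓ √(((t-c)/2)² + b²) = min(t,c) - δ_b(t)` and `max(t,c) + δ_b(t)`. -/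
theorem stmt_9 (b c t : ℝ) (hb : 0 < b) (ht : t ≠ c) :
    let δ := b * Real.tan ((1 / 2) * Real.arctan (2 * b / |t - c|))
    (t + c) / 2 - Real.sqrt (((t - c) / 2) ^ 2 + b ^ 2) = min t c - δ ∧
    (t + c) / 2 + Real.sqrt (((t - c) / 2) ^ 2 + b ^ 2) = max t c + δ :=
  stmt_9_general b c t ht
end
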